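/- Let w be a nontrivial cyclically reduced element of the free group F(a,b,c), let M(w) be the maximum of |z| over all maximal subwords of the form a^z or b^z of the cyclic word of w (with M(w) = 0 if there are none), and let m > M(w). If φ_m(w) = v^z for some v ∈ F(a,b) and z ∈ ℤ, then |z| ≤ |w|, where |w| is the length of the reduced word representing w and φ_m : F(a,b,c) → F(a,b) is the homomorphism sending a ↦ a, b ↦ b, c ↦ a^m b^m. -/

import Mathlib

/-- The homomorphism `F(a,b,c) → F(a,b)` sending `a ↦ a`, `b ↦ b`, `c ↦ a^m b^m`.
Here the generators of `F(a,b,c)` are `0, 1, 2 : Fin 3` and those of `F(a,b)` are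
`0, 1 : Fin 2`. -/
def phiSubst (m : ℕ) : FreeGroup (Fin 3) →* FreeGroup (Fin 2) :=
  FreeGroup.lift ![FreeGroup.of 0, FreeGroup.of 1, FreeGroup.of 0 ^ m * FreeGroup.of 1 ^ m]

/-!
Measure elements of `F(a,b)` by the number of syllables (maximal runs of one generator) of their
reduced word, and by the character `χ : a ↦ 1, b ↦ -1`. Since `φ_m(w)` is a product of `|w|`
images of letters with at most two syllables each, it has at most `2|w|` syllables; since `χ`
kills `φ_m(c) = a^m b^m`, also `|χ(φ_m w)| ≤ |w|`. On the other side write `v^z = u^N` with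
`N = |z|` and `u = s t s⁻¹`, `t` cyclically reduced; the reduced word of `u^N` contains `t^N`.
If `t` involves both generators, `u^N` has at least `2N` syllables; otherwise `t = x^k`, and
`|χ(u^N)| = N|k| ≥ N`. Either way `N ≤ |w|`.

This needs `v ≠ 1`, i.e. `φ_m(w) ≠ 1`, which is where `m > M(w)` enters. Reading `w` from the
right, we follow the first syllable of the image of each suffix: it is `a^{±m}` or `b^{±m}`
exactly when the suffix starts with `c^{±1}`, and a run `a^r` or `b^r` with `0 < r < m` can
neither cancel such a syllable nor produce one, so no suffix has trivial image.
-/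

open scoped List

namespace List

section DecidableEq

variable {α : Type*} [DecidableEq α]

theorem Sublist.length_destutter_ne_le {l₁ l₂ : List α} (h : l₁ <+ l₂) :
    (l₁.destutter (· ≠ ·)).length ≤ (l₂.destutter (· ≠ ·)).length :=
  IsChain.length_le_length_destutter_ne ((destutter_sublist _ l₁).trans h)
    (isChain_destutter _ l₁)

theorem length_destutter_ne_append_le (l₁ l₂ : List α) :
    ((l₁ ++ l₂).destutter (· ≠ ·)).length ≤
      (l₁.destutter (· ≠ ·)).length + (l₂.destutter (· ≠ ·)).length := by
  obtain ⟨r₁, r₂, hr, h₁, h₂⟩ :=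
    sublist_append_iff.1 (destutter_sublist (· ≠ ·) (l₁ ++ l₂))
  have hchain := isChain_destutter (· ≠ ·) (l₁ ++ l₂)
  rw [hr] at hchain ⊢
  rw [length_append]
  exact add_le_add ((hchain.infix infix_append_left).length_le_length_destutter_ne h₁)
    ((hchain.infix (suffix_append _ _).isInfix).length_le_length_destutter_ne h₂)

theorem length_destutter_ne_replicate_le (n : ℕ) (a : α) :
    ((replicate n a).destutter (· ≠ ·)).length ≤ 1 := by
  obtain ⟨k, -, hk⟩ := sublist_replicate_iff.1 (destutter_sublist (· ≠ ·) (replicate n a))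
  have hchain := isChain_destutter (· ≠ ·) (replicate n a)
  rw [hk] at hchain ⊢
  match k, hchain with
  | 0, _ | 1, _ => simp
  | k + 2, h => simp [replicate_succ] at h

theorem two_mul_le_length_destutter_ne_flatten_replicate {a b : α} {l : List α} (hab : a ≠ b)
    (h : [a, b] <+ l) (N : ℕ) :
    2 * N ≤ ((replicate N l).flatten.destutter (· ≠ ·)).length := by
  have hsub : (replicate N [a, b]).flatten <+ (replicate N l).flatten := by
    induction N with
    | zero => simp
    | succ N ih => simpa [replicate_succ] using h.append ih
  have hchain : ((replicate N [a, b]).flatten).IsChain (· ≠ ·) := by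
    rw [isChain_flatten (by simp)]
    refine ⟨by simp [hab], isChain_replicate_of_rel _ ?_⟩
    simp [hab.symm]
  simpa [mul_comm] using hchain.length_le_length_destutter_ne hsub

end DecidableEq

variable {α : Type*}

theorem lt_of_not_replicate_infix {a : α} {m r : ℕ} {l : List α}
    (h : ¬ replicate m a <:+: replicate r a ++ l) : r < m := by
  by_contra! hmr
  rw [← Nat.add_sub_cancel' hmr, replicate_add, append_assoc] at h
  exact h (prefix_append _ _).isInfix

theorem exists_ne_pair_sublist {l : List α} {a b : α} (ha : a ∈ l) (hb : b ∈ l)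
    (hab : a ≠ b) :
    ∃ c d, c ≠ d ∧ [c, d] <+ l := by
  cases l with
  | nil => simp at ha
  | cons x l =>
    by_contra! hne
    have hx : ∀ y ∈ x :: l, y = x := by
      intro y hy
      by_contra hyx
      exact hne x y (Ne.symm hyx)
        ((singleton_sublist.2 ((mem_cons.1 hy).resolve_left hyx)).cons_cons x)
    exact hab ((hx a ha).trans (hx b hb).symm)

end List

namespace FreeGroup

variable {α : Type*}

theorem mk_replicate (x : α) (d : Bool) (r : ℕ) :
    mk (List.replicate r (x, d)) = of x ^ (bif d then (r : ℤ) else -r) := by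
  classical
  cases d
  · have : List.replicate r (x, false) = invRev (of x ^ r).toWord := by simp [invRev]
    rw [this, ← inv_mk, mk_toWord, cond_false, zpow_neg, zpow_natCast]
  · rw [← toWord_of_pow, mk_toWord, cond_true, zpow_natCast]

theorem exists_mk_eq_of_zpow {L : List (α × Bool)} {x : α} (h : ∀ p ∈ L, p.1 = x) :
    ∃ k : ℤ, mk L = of x ^ k := by
  induction L with
  | nil => exact ⟨0, by simp [← one_eq_mk]⟩
  | cons p L ih =>
    obtain ⟨k, hk⟩ := ih fun q hq => h q (List.mem_cons_of_mem p hq)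
    obtain ⟨y, d⟩ := p
    obtain rfl : y = x := h _ List.mem_cons_self
    refine ⟨(bif d then 1 else -1) + k, ?_⟩
    rw [← List.singleton_append, ← mul_mk, hk, zpow_add, ← List.replicate_one, mk_replicate,
      Nat.cast_one]

theorem IsReduced.fst_ne_of_replicate_append {x : α} {d : Bool} {r : ℕ} {q : α × Bool}
    {L : List (α × Bool)} (h : IsReduced (List.replicate r (x, d) ++ q :: L)) (hr : 0 < r)
    (hq : q ≠ (x, d)) : q.1 ≠ x := by
  intro hqx
  have hd := (List.isChain_append.1 h).2.2 (x, d)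
    (by simp [List.getLast?_replicate, hr.ne']) q rfl hqx.symm
  exact hq (Prod.ext hqx hd.symm)

variable [DecidableEq α]

theorem toWord_of_zpow (x : α) (k : ℤ) :
    (of x ^ k).toWord = List.replicate k.natAbs (x, decide (0 ≤ k)) := by
  cases k with
  | ofNat n => simp
  | negSucc n => simp [zpow_negSucc, toWord_inv, invRev]

theorem le_mul_norm_of_subadditive {G : Type*} [Group G] (μ : G → ℕ) (hμ₁ : μ 1 = 0)
    (hμ : ∀ a b, μ (a * b) ≤ μ a + μ b) (f : FreeGroup α →* G) {K : ℕ}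
    (hf : ∀ p : α × Bool, μ (f (mk [p])) ≤ K) (g : FreeGroup α) :
    μ (f g) ≤ K * norm g := by
  suffices ∀ L : List (α × Bool), μ (f (mk L)) ≤ K * L.length by
    simpa [norm, mk_toWord] using this g.toWord
  intro L
  induction L with
  | nil => simp [← one_eq_mk, hμ₁]
  | cons p L ih =>
    rw [← List.singleton_append, ← mul_mk, _root_.map_mul, List.length_append,
      List.length_singleton, mul_one_add]
    exact (hμ _ _).trans (add_le_add (hf p) ih)

def syllableCount (g : FreeGroup α) : ℕ := ((g.toWord.map Prod.fst).destutter (· ≠ ·)).length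

@[simp] theorem syllableCount_one : syllableCount (1 : FreeGroup α) = 0 := by
  simp [syllableCount]

theorem syllableCount_mul_le (g h : FreeGroup α) :
    syllableCount (g * h) ≤ syllableCount g + syllableCount h := by
  unfold syllableCount
  refine le_trans ?_ (List.length_destutter_ne_append_le _ _)
  rw [← List.map_append]
  exact ((toWord_mul_sublist g h).map _).length_destutter_ne_le

theorem syllableCount_of_zpow_le (x : α) (k : ℤ) : syllableCount (of x ^ k) ≤ 1 := by
  simpa [syllableCount, toWord_of_zpow] using List.length_destutter_ne_replicate_le k.natAbs x

theorem two_mul_le_syllableCount_pow {u : FreeGroup α} {a b : α} (hab : a ≠ b)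
    (h : [a, b] <+ (reduceCyclically u.toWord).map Prod.fst) (N : ℕ) :
    2 * N ≤ syllableCount (u ^ N) := by
  rcases Nat.eq_zero_or_pos N with rfl | hN
  · simp
  have hword : (u ^ N).toWord = reduceCyclically.conjugator u.toWord ++
      (List.replicate N (reduceCyclically u.toWord)).flatten ++
      invRev (reduceCyclically.conjugator u.toWord) := by
    rw [toWord_pow, reduceCyclically.reduce_flatten_replicate isReduced_toWord, if_neg hN.ne']
  have hsub : (List.replicate N ((reduceCyclically u.toWord).map Prod.fst)).flatten <+
      (u ^ N).toWord.map Prod.fst := by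
    rw [hword, ← List.map_replicate, ← List.map_flatten]
    exact (List.infix_append _ _ _).sublist.map _
  exact (List.two_mul_le_length_destutter_ne_flatten_replicate hab h N).trans
    hsub.length_destutter_ne_le

def firstGen (g : FreeGroup α) : Option α := g.toWord.head?.map Prod.fst

@[simp] theorem firstGen_one : firstGen (1 : FreeGroup α) = none := by
  simp [firstGen]

theorem firstGen_of_zpow_mul {x : α} {k : ℤ} {g : FreeGroup α} (hk : k ≠ 0)
    (hg : firstGen g ≠ some x) : firstGen (of x ^ k * g) = some x := by
  have hred : IsReduced ((of x ^ k).toWord ++ g.toWord) := by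
    rw [toWord_of_zpow, IsReduced, List.isChain_append]
    refine ⟨List.isChain_replicate_of_rel _ fun _ => rfl, isReduced_toWord, ?_⟩
    intro p hp q hq hpq
    simp only [List.getLast?_replicate, Option.mem_def, Option.ite_none_left_eq_some,
      Option.some.injEq] at hp
    exact absurd (by rw [firstGen, Option.mem_def.1 hq, Option.map_some, ← hpq, ← hp.2]) hg
  rw [firstGen, toWord_mul, hred.reduce_eq, toWord_of_zpow]
  obtain ⟨n, hn⟩ := Nat.exists_eq_succ_of_ne_zero (Int.natAbs_ne_zero.2 hk)
  simp [hn, List.replicate_succ]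

def HasLeadingSyllable (g : FreeGroup α) (x : α) (k : ℤ) : Prop :=
  ∃ h, g = of x ^ k * h ∧ k ≠ 0 ∧ firstGen h ≠ some x

theorem hasLeadingSyllable_zpow_mul {g : FreeGroup α} {x : α} {k : ℤ} (hk : k ≠ 0)
    (hg : firstGen g ≠ some x) : HasLeadingSyllable (of x ^ k * g) x k :=
  ⟨g, rfl, hk, hg⟩

theorem HasLeadingSyllable.firstGen_eq {g : FreeGroup α} {x : α} {k : ℤ}
    (h : HasLeadingSyllable g x k) : firstGen g = some x := by
  obtain ⟨h, rfl, hk, hh⟩ := h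
  exact firstGen_of_zpow_mul hk hh

theorem HasLeadingSyllable.ne_one {g : FreeGroup α} {x : α} {k : ℤ}
    (h : HasLeadingSyllable g x k) : g ≠ 1 := by
  rintro rfl
  simpa using h.firstGen_eq

theorem HasLeadingSyllable.zpow_mul {g : FreeGroup α} {x : α} {j k : ℤ}
    (h : HasLeadingSyllable g x k) (hjk : j + k ≠ 0) :
    HasLeadingSyllable (of x ^ j * g) x (j + k) := by
  obtain ⟨h, rfl, -, hh⟩ := h
  exact ⟨h, by rw [zpow_add, mul_assoc], hjk, hh⟩

end FreeGroup

open FreeGroup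

theorem phiSubst_of_castSucc (m : ℕ) (i : Fin 2) : phiSubst m (of i.castSucc) = of i := by
  fin_cases i <;> rfl

theorem phiSubst_mk_replicate_append (m r : ℕ) (i : Fin 2) (d : Bool) (V : List (Fin 3 × Bool)) :
    phiSubst m (mk (List.replicate r (i.castSucc, d) ++ V)) =
      of i ^ (bif d then (r : ℤ) else -r) * phiSubst m (mk V) := by
  rw [← mul_mk, _root_.map_mul, mk_replicate, map_zpow, phiSubst_of_castSucc]

/-- The generator in which `φ_m` of the letter `p` begins (`c⁻¹ ↦ b^{-m} a^{-m}` begins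
in `b`). -/
def leadingGen (p : Fin 3 × Bool) : Fin 2 :=
  Fin.lastCases (motive := fun _ => Fin 2) (bif p.2 then 0 else 1) id p.1

@[simp] theorem leadingGen_castSucc (i : Fin 2) (d : Bool) : leadingGen (i.castSucc, d) = i :=
  Fin.lastCases_castSucc i

@[simp] theorem leadingGen_two (d : Bool) : leadingGen (2, d) = bif d then 0 else 1 :=
  Fin.lastCases_last

theorem phiSubst_mk_two_cons (m : ℕ) (d : Bool) (V : List (Fin 3 × Bool)) :
    phiSubst m (mk ((2, d) :: V)) =
      of (leadingGen (2, d)) ^ (bif d then (m : ℤ) else -m) *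
        (of (leadingGen (2, !d)) ^ (bif d then (m : ℤ) else -m) * phiSubst m (mk V)) := by
  rw [← List.singleton_append, ← mul_mk, _root_.map_mul, ← List.replicate_one, mk_replicate]
  cases d <;> simp [phiSubst] <;> group

def ShortRuns (m : ℕ) (V : List (Fin 3 × Bool)) : Prop :=
  ∀ (i : Fin 2) (d : Bool), ¬ List.replicate m (i.castSucc, d) <:+: V

/-- The leading exponent is `±m` exactly for `c^{±1}`: prepending a run of length `< m` can
neither cancel nor create such a syllable, and prepending `c^{±1}` cancels a leading syllable only
if it is `b^{∓m}`, resp. `a^{±m}`. -/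
def LeadingSyllableInvariant (m : ℕ) (V : List (Fin 3 × Bool)) : Prop :=
  ∀ p ∈ V.head?, ∃ k, HasLeadingSyllable (phiSubst m (mk V)) (leadingGen p) k ∧
    (k.natAbs = m ↔ p.1 = 2)

section NontrivialImage

variable {m : ℕ}

theorem ShortRuns.infix {V W : List (Fin 3 × Bool)} (h : ShortRuns m V) (hW : W <:+: V) :
    ShortRuns m W :=
  fun i d hi => h i d (hi.trans hW)

theorem LeadingSyllableInvariant.two_cons (hm : 0 < m) (d : Bool) {V : List (Fin 3 × Bool)}
    (hV : LeadingSyllableInvariant m V) (hred : IsReduced ((2, d) :: V)) :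
    LeadingSyllableInvariant m ((2, d) :: V) := by
  have hj : (bif d then (m : ℤ) else -m).natAbs = m := by cases d <;> simp
  rintro p ⟨⟩
  refine ⟨_, ?_, by simpa using hj⟩
  rw [phiSubst_mk_two_cons]
  generalize (bif d then (m : ℤ) else -m) = j at hj ⊢
  set y := leadingGen (2, !d)
  have hy : firstGen (of y ^ j * phiSubst m (mk V)) = some y := by
    rcases V with _ | ⟨q, V⟩
    · exact firstGen_of_zpow_mul (by omega) (by simp [← one_eq_mk])
    obtain ⟨k, hk, hkm⟩ := hV q rfl
    by_cases hq : leadingGen q = y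
    · have hq₁ : q.1 ≠ 2 := by
        obtain ⟨qx, qd⟩ := q
        rintro rfl
        have : qd = !d := by cases d <;> cases qd <;> simp_all [y]
        simp [this] at hred
      exact (hq ▸ hk).zpow_mul (by omega) |>.firstGen_eq
    · exact firstGen_of_zpow_mul (by omega) (by simpa [hk.firstGen_eq] using hq)
  refine hasLeadingSyllable_zpow_mul (by omega) ?_
  rw [hy]
  cases d <;> simp [y]

theorem LeadingSyllableInvariant.replicate_append {r : ℕ} (hr : 0 < r) (hrm : r < m) (i : Fin 2)
    (d : Bool) {V : List (Fin 3 × Bool)} (hV : LeadingSyllableInvariant m V)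
    (hhead : ∀ q ∈ V.head?, q.1 ≠ i.castSucc) :
    LeadingSyllableInvariant m (List.replicate r (i.castSucc, d) ++ V) := by
  have he : (bif d then (r : ℤ) else -r).natAbs = r := by cases d <;> simp
  intro p hp
  obtain rfl : p = (i.castSucc, d) := by
    simpa [List.head?_append, List.head?_replicate, hr.ne'] using hp.symm
  rw [phiSubst_mk_replicate_append]
  generalize (bif d then (r : ℤ) else -r) = e at he ⊢
  simp only [leadingGen, Fin.lastCases_castSucc, id,
    show i.castSucc ≠ 2 from Fin.castSucc_ne_last i, iff_false]
  rcases V with _ | ⟨q, V⟩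
  · exact ⟨e, hasLeadingSyllable_zpow_mul (by omega) (by simp [← one_eq_mk]), by omega⟩
  obtain ⟨k, hk, hkm⟩ := hV q rfl
  by_cases hq : leadingGen q = i
  · have hq₁ : q.1 = 2 := by
      obtain ⟨qx, qd⟩ := q
      cases qx using Fin.lastCases with
      | last => rfl
      | cast j => simp_all
    exact ⟨e + k, (hq ▸ hk).zpow_mul (by omega), by omega⟩
  · refine ⟨e, hasLeadingSyllable_zpow_mul (by omega) ?_, by omega⟩
    simpa [hk.firstGen_eq] using hq

theorem leadingSyllableInvariant (hm : 0 < m) {V : List (Fin 3 × Bool)} (hred : IsReduced V)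
    (hrun : ShortRuns m V) : LeadingSyllableInvariant m V := by
  -- a maximal run of `a^{±1}` or `b^{±1}` has to be prepended in one step, so the induction
  -- carries the part of it already read
  suffices ∀ V r (i : Fin 2) d, IsReduced (List.replicate r (i.castSucc, d) ++ V) →
      ShortRuns m (List.replicate r (i.castSucc, d) ++ V) →
      LeadingSyllableInvariant m (List.replicate r (i.castSucc, d) ++ V) from
    this V 0 0 true hred hrun
  intro V
  induction V with
  | nil =>
    intro r i d _ hrun
    rcases Nat.eq_zero_or_pos r with rfl | hr
    · simp [LeadingSyllableInvariant]
    · exact .replicate_append hr (List.lt_of_not_replicate_infix (hrun i d)) i d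
        (by simp [LeadingSyllableInvariant]) (by simp)
  | cons p V ih =>
    intro r i d hred hrun
    by_cases hp : p = (i.castSucc, d)
    · subst hp
      have : List.replicate r (i.castSucc, d) ++ (i.castSucc, d) :: V =
          List.replicate (r + 1) (i.castSucc, d) ++ V := by
        simp [List.replicate_succ']
      rw [this] at hred hrun ⊢
      exact ih _ _ _ hred hrun
    have hsuffix : p :: V <:+: List.replicate r (i.castSucc, d) ++ p :: V :=
      (List.suffix_append _ _).isInfix
    have hpV : LeadingSyllableInvariant m (p :: V) := by
      obtain ⟨x, e⟩ := p
      cases x using Fin.lastCases with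
      | last =>
        have htail : V <:+: List.replicate r (i.castSucc, d) ++ (Fin.last 2, e) :: V :=
          (List.suffix_cons _ _).isInfix.trans hsuffix
        exact .two_cons hm e (ih 0 0 true (hred.infix htail) (hrun.infix htail))
          (hred.infix hsuffix)
      | cast j => exact ih 1 j e (hred.infix hsuffix) (hrun.infix hsuffix)
    rcases Nat.eq_zero_or_pos r with rfl | hr
    · exact hpV
    refine .replicate_append hr (List.lt_of_not_replicate_infix (hrun i d)) i d hpV ?_
    rintro _ ⟨⟩
    exact hred.fst_ne_of_replicate_append hr hp

theorem phiSubst_mk_ne_one (hm : 0 < m) {V : List (Fin 3 × Bool)} (hred : IsReduced V)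
    (hne : V ≠ []) (hrun : ShortRuns m V) : phiSubst m (mk V) ≠ 1 := by
  obtain ⟨p, V, rfl⟩ := List.exists_cons_of_ne_nil hne
  obtain ⟨k, hk, -⟩ := leadingSyllableInvariant hm hred hrun p rfl
  exact hk.ne_one

end NontrivialImage

theorem syllableCount_phiSubst_le (m : ℕ) (w : FreeGroup (Fin 3)) :
    syllableCount (phiSubst m w) ≤ 2 * FreeGroup.norm w := by
  refine le_mul_norm_of_subadditive _ syllableCount_one syllableCount_mul_le _ ?_ w
  rintro ⟨x, d⟩
  cases x using Fin.lastCases with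
  | last =>
    change syllableCount (phiSubst m (mk [(2, d)])) ≤ 2
    rw [phiSubst_mk_two_cons, ← one_eq_mk, _root_.map_one, mul_one]
    exact (syllableCount_mul_le _ _).trans
      (add_le_add (syllableCount_of_zpow_le _ _) (syllableCount_of_zpow_le _ _))
  | cast i =>
    rw [← List.replicate_one, ← List.append_nil (List.replicate 1 _),
      phiSubst_mk_replicate_append, ← one_eq_mk, _root_.map_one, mul_one]
    exact (syllableCount_of_zpow_le _ _).trans one_le_two

def exponentSumDiff : FreeGroup (Fin 2) →* Multiplicative ℤ :=
  FreeGroup.lift ![Multiplicative.ofAdd 1, Multiplicative.ofAdd (-1)]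

theorem natAbs_exponentSumDiff_phiSubst_le (m : ℕ) (w : FreeGroup (Fin 3)) :
    (Multiplicative.toAdd (exponentSumDiff (phiSubst m w))).natAbs ≤ FreeGroup.norm w := by
  simpa using le_mul_norm_of_subadditive (fun a => (Multiplicative.toAdd a).natAbs) rfl
    (fun a b => Int.natAbs_add_le _ _) (exponentSumDiff.comp (phiSubst m)) (K := 1)
    (by rintro ⟨x, d⟩; fin_cases x <;> cases d <;> simp [phiSubst, exponentSumDiff, lift_mk]) w

theorem two_mul_le_syllableCount_pow_or_le_natAbs_exponentSumDiff {u : FreeGroup (Fin 2)}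
    (hu : u ≠ 1) (N : ℕ) :
    2 * N ≤ syllableCount (u ^ N) ∨
      N ≤ (Multiplicative.toAdd (exponentSumDiff (u ^ N))).natAbs := by
  set T := reduceCyclically u.toWord
  by_cases hpair : ∃ a b, a ≠ b ∧ [a, b] <+ T.map Prod.fst
  · obtain ⟨a, b, hab, h⟩ := hpair
    exact .inl (two_mul_le_syllableCount_pow hab h N)
  right
  obtain ⟨x, hx⟩ : ∃ x, ∀ p ∈ T, p.1 = x := by
    by_contra! h
    obtain ⟨p, hp, -⟩ := h 0
    obtain ⟨q, hq, hpq⟩ := h p.1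
    exact hpair
      (List.exists_ne_pair_sublist (List.mem_map_of_mem hp) (List.mem_map_of_mem hq) hpq.symm)
  obtain ⟨k, hk⟩ := exists_mk_eq_of_zpow hx
  set c := mk (reduceCyclically.conjugator u.toWord)
  have hconj : u = c * of x ^ k * c⁻¹ := by
    rw [← hk, inv_mk, mul_mk, mul_mk, reduceCyclically.conj_conjugator_reduceCyclically,
      mk_toWord]
  have hk₀ : k ≠ 0 := by
    rintro rfl
    simp [hconj] at hu
  have hx₁ : (Multiplicative.toAdd (exponentSumDiff (of x))).natAbs = 1 := by
    fin_cases x <;> rfl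
  rw [hconj, map_pow, _root_.map_mul, _root_.map_mul, _root_.map_inv, mul_inv_cancel_comm,
    map_zpow, toAdd_pow, toAdd_zpow, smul_eq_mul, nsmul_eq_mul, Int.natAbs_mul, Int.natAbs_mul,
    hx₁, Int.natAbs_natCast, mul_one]
  exact Nat.le_mul_of_pos_right N (Int.natAbs_pos.2 hk₀)

theorem exponent_le_norm_of_phiSubst_eq_zpow (m : ℕ) (w : FreeGroup (Fin 3)) (hw : w ≠ 1)
    (hm : ∀ (x : Fin 3) (d : Bool) (r : ℕ), x ≠ 2 → r ≤ w.toWord.length →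
      List.replicate r (x, d) <:+: (w.toWord ++ w.toWord) → r < m)
    (v : FreeGroup (Fin 2)) (z : ℤ) (h : phiSubst m w = v ^ z) :
    z.natAbs ≤ FreeGroup.norm w := by
  have hm₀ : 0 < m := hm 0 true 0 (by decide) (Nat.zero_le _) List.nil_infix
  have hrun : ShortRuns m w.toWord := fun i d hi =>
    lt_irrefl m <| hm _ d m (Fin.castSucc_ne_last i) (by simpa using hi.length_le)
      (hi.trans List.infix_append_left)
  have hφ : phiSubst m w ≠ 1 := by
    simpa [mk_toWord] using phiSubst_mk_ne_one hm₀ isReduced_toWord (by simpa using hw) hrun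
  obtain ⟨u, hu⟩ : ∃ u : FreeGroup (Fin 2), v ^ z = u ^ z.natAbs := by
    rcases Int.natAbs_eq z with hz | hz
    · exact ⟨v, by rw [← zpow_natCast, ← hz]⟩
    · exact ⟨v⁻¹, by rw [inv_pow, ← zpow_natCast, ← zpow_neg, ← hz]⟩
  rw [hu] at h
  have hu₁ : u ≠ 1 := by
    rintro rfl
    exact hφ (by simpa using h)
  rcases two_mul_le_syllableCount_pow_or_le_natAbs_exponentSumDiff hu₁ z.natAbs with hz | hz
  · have := syllableCount_phiSubst_le m w
    rw [h] at this
    omega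
  · have := natAbs_exponentSumDiff_phiSubst_le m w
    rw [h] at this
    omega
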